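/- Let G be a finite simple graph, s ≥ 1 an integer, and σ an s-degeneracy ordering of G of width d. Then every s-club of G has at most d + 1 vertices. -/

import Mathlib

/-- `C` is an `s`-club in `G`: any two vertices of `C` have distance at most `s`
in the induced subgraph `G[C]`. -/
def IsSClub {V : Type*} (G : SimpleGraph V) (s : ℕ) (C : Set V) : Prop :=
  ∀ u v : C, (G.induce C).edist u v ≤ s

/-- The `x`-th neighborhood of `v` in `G`: vertices `u` with `1 ≤ dist_G(u,v) ≤ x`. -/
def xNbhd {V : Type*} (G : SimpleGraph V) (x : ℕ) (v : V) : Set V :=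
  {u | 1 ≤ G.edist u v ∧ G.edist u v ≤ x}

/-- The set of vertices appearing at or after `v` in the ordering `σ`. -/
def laterSet {V : Type*} (σ : V → ℕ) (v : V) : Set V := {u | σ v ≤ σ u}

theorem mem_laterSet_self {V : Type*} (σ : V → ℕ) (v : V) : v ∈ laterSet σ v :=
  le_refl (σ v)

/-- `σ` (an injective enumeration, i.e. a linear ordering of the vertices) is an
`x`-degeneracy ordering of `G` of width `d`. -/
def IsXDegenOrdering {V : Type*} (G : SimpleGraph V) (x d : ℕ) (σ : V → ℕ) : Prop :=
  Function.Injective σ ∧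
  ∀ v : V, (xNbhd (G.induce (laterSet σ v)) x ⟨v, mem_laterSet_self σ v⟩).ncard ≤ d

/-! Let `v` be the vertex of the club `C` that comes first in `σ`. Then `G[C]` is a subgraph of
the graph induced on the vertices from `v` on, so every other vertex of `C` is within distance
`s` of `v` there, and the degeneracy bound at `v` leaves room for at most `d` of them. -/

theorem SimpleGraph.Hom.edist_le {V W : Type*} {G : SimpleGraph V} {H : SimpleGraph W}
    (f : G →g H) (u v : V) : H.edist (f u) (f v) ≤ G.edist u v := by
  rcases eq_or_ne (G.edist u v) ⊤ with h | h
  · simp [h]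
  obtain ⟨p, hp⟩ := SimpleGraph.exists_walk_of_edist_ne_top h
  simpa [hp] using H.edist_le (p.map f)

namespace IsSClub

variable {V : Type*} {G : SimpleGraph V} {s : ℕ} {C L : Set V} {v : V}

theorem diff_singleton_subset_xNbhd (hC : IsSClub G s C) (hCL : C ⊆ L) (hvC : v ∈ C) :
    C \ {v} ⊆ Subtype.val '' xNbhd (G.induce L) s ⟨v, hCL hvC⟩ := by
  rintro u ⟨huC, huv⟩
  refine ⟨⟨u, hCL huC⟩, ⟨?_, ?_⟩, rfl⟩
  · exact Order.one_le_iff_pos.mpr (SimpleGraph.edist_pos_of_ne (by simpa using huv))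
  · exact ((G.induceHomOfLE hCL).toHom.edist_le ⟨u, huC⟩ ⟨v, hvC⟩).trans (hC _ _)

theorem ncard_le_of_subset [Finite V] {d : ℕ} (hC : IsSClub G s C) (hCL : C ⊆ L)
    (hvC : v ∈ C) (hv : (xNbhd (G.induce L) s ⟨v, hCL hvC⟩).ncard ≤ d) :
    C.ncard ≤ d + 1 := by
  have hdiff : (C \ {v}).ncard ≤ d :=
    calc (C \ {v}).ncard
        ≤ (Subtype.val '' xNbhd (G.induce L) s ⟨v, hCL hvC⟩).ncard :=
          Set.ncard_le_ncard (hC.diff_singleton_subset_xNbhd hCL hvC)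
      _ = (xNbhd (G.induce L) s ⟨v, hCL hvC⟩).ncard :=
          Set.ncard_image_of_injective _ Subtype.val_injective
      _ ≤ d := hv
  have := Set.ncard_sdiff_singleton_add_one hvC (Set.toFinite C)
  omega

end IsSClub

theorem stmt_9_general {V : Type*} [Fintype V] (G : SimpleGraph V) (s : ℕ)
    (d : ℕ) (σ : V → ℕ) (hσ : IsXDegenOrdering G s d σ)
    (C : Set V) (hC : IsSClub G s C) : C.ncard ≤ d + 1 := by
  rcases C.eq_empty_or_nonempty with rfl | hne
  · simp
  obtain ⟨v, hvC, hvmin⟩ := Set.exists_min_image C σ (Set.toFinite C) hne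
  have hCL : C ⊆ laterSet σ v := hvmin
  exact hC.ncard_le_of_subset hCL hvC (hσ.2 v)

theorem stmt_9 {V : Type*} [Fintype V] (G : SimpleGraph V) (s : ℕ) (hs : 1 ≤ s)
    (d : ℕ) (σ : V → ℕ) (hσ : IsXDegenOrdering G s d σ)
    (C : Set V) (hC : IsSClub G s C) : C.ncard ≤ d + 1 :=
  stmt_9_general G s d σ hσ C hC
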